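/- Let F : ℝⁿ → ℝⁿ be a C¹ map with n ≥ 2. Suppose that for every x ∈ ℝⁿ no complex eigenvalue of JF(x) is zero, that every eigenvalue of JF(x)+JF(x)^T is negative for every x, and that there exist M₁, M₂ > 0 such that for every x ∈ ℝⁿ the trace of JF(x)+JF(x)^T is greater than −M₁ and the absolute value of its determinant is greater than M₂. Then F is injective. -/

import Mathlib

/-!
The symmetric part of `JF(x)` is negative definite, so for `v = a - b ≠ 0` the function
`t ↦ ⟪F (b + t v), v⟫` has derivative `⟪JF v, v⟫ = ½ ⟪(JF + JFᵀ) v, v⟫ < 0`. It is therefore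
strictly decreasing, and `F a ≠ F b`.
-/

open Matrix

/-- The Jacobian matrix of a map `F : ℝⁿ → ℝⁿ` at a point `x`:
the matrix of the total (Fréchet) derivative of `F` at `x` in the standard basis. -/
noncomputable def jacobianMatrix {n : ℕ} (F : (Fin n → ℝ) → (Fin n → ℝ)) (x : Fin n → ℝ) :
    Matrix (Fin n) (Fin n) ℝ :=
  LinearMap.toMatrix' (fderiv ℝ F x).toLinearMap

/-- `μ : ℂ` is a (complex) eigenvalue of the real matrix `A`. -/
def HasComplexEigenvalue {n : ℕ} (A : Matrix (Fin n) (Fin n) ℝ) (μ : ℂ) : Prop :=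
  ∃ v : Fin n → ℂ, v ≠ 0 ∧ (A.map Complex.ofReal).mulVec v = μ • v

/-- `μ : ℝ` is a (real) eigenvalue of the real matrix `A`. -/
def HasRealEigenvalue {n : ℕ} (A : Matrix (Fin n) (Fin n) ℝ) (μ : ℝ) : Prop :=
  ∃ v : Fin n → ℝ, v ≠ 0 ∧ A.mulVec v = μ • v

theorem Matrix.IsSymm.dotProduct_mulVec_neg {n : ℕ} {S : Matrix (Fin n) (Fin n) ℝ}
    (hS : S.IsSymm) (hneg : ∀ μ, HasRealEigenvalue S μ → μ < 0) {v : Fin n → ℝ} (hv : v ≠ 0) :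
    v ⬝ᵥ S *ᵥ v < 0 := by
  have hH : (-S).IsHermitian := by
    simpa [IsHermitian, conjTranspose_eq_transpose_of_trivial] using hS.eq
  have hpos : (-S).PosDef := hH.posDef_iff_eigenvalues_pos.mpr fun i => by
    have he := hH.mulVec_eigenvectorBasis i
    refine neg_lt_zero.mp (hneg _ ⟨hH.eigenvectorBasis i, ?_, ?_⟩)
    · exact fun h0 => hH.eigenvectorBasis.toBasis.ne_zero i (by ext j; exact congrFun h0 j)
    · rw [neg_mulVec, neg_eq_iff_eq_neg] at he
      rw [he, neg_smul]
  simpa [neg_mulVec] using hpos.dotProduct_mulVec_pos hv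

theorem Matrix.dotProduct_add_transpose_mulVec {ι R : Type*} [Fintype ι] [CommSemiring R]
    (A : Matrix ι ι R) (v : ι → R) : v ⬝ᵥ (A + Aᵀ) *ᵥ v = 2 * (v ⬝ᵥ A *ᵥ v) := by
  rw [add_mulVec, dotProduct_add, mulVec_transpose, dotProduct_comm v (v ᵥ* A),
    ← dotProduct_mulVec, two_mul]

theorem ne_of_forall_fderiv_apply_neg {E G : Type*} [NormedAddCommGroup E] [NormedSpace ℝ E]
    [NormedAddCommGroup G] [NormedSpace ℝ G] {F : E → G} (hF : Differentiable ℝ F)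
    (ℓ : G →L[ℝ] ℝ) {a v : E} (h : ∀ t : ℝ, ℓ (fderiv ℝ F (a + t • v) v) < 0) :
    F (a + v) ≠ F a := by
  have hderiv (t : ℝ) :
      HasDerivAt (fun s : ℝ => ℓ (F (a + s • v))) (ℓ (fderiv ℝ F (a + t • v) v)) t := by
    have hline : HasDerivAt (fun s : ℝ => a + s • v) v t := by
      simpa using ((hasDerivAt_id t).smul_const v).const_add a
    exact ℓ.hasFDerivAt.comp_hasDerivAt t ((hF _).hasFDerivAt.comp_hasDerivAt t hline)
  have hanti : StrictAnti fun s : ℝ => ℓ (F (a + s • v)) :=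
    strictAnti_of_deriv_neg fun t => (hderiv t).deriv ▸ h t
  intro heq
  simpa [heq] using hanti zero_lt_one

theorem injective_of_dotProduct_fderiv_apply_neg {ι : Type*} [Fintype ι]
    {F : (ι → ℝ) → (ι → ℝ)} (hF : Differentiable ℝ F)
    (h : ∀ x v, v ≠ 0 → v ⬝ᵥ fderiv ℝ F x v < 0) : Function.Injective F := by
  intro a b hab
  by_contra hne
  refine ne_of_forall_fderiv_apply_neg hF (dotProductBilin ℝ ℝ (a - b)).toContinuousLinearMap
    (a := b) (v := a - b) (fun t => h _ _ (sub_ne_zero.mpr hne)) ?_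
  simpa using hab

theorem jacobianMatrix_mulVec {n : ℕ} (F : (Fin n → ℝ) → (Fin n → ℝ)) (x v : Fin n → ℝ) :
    jacobianMatrix F x *ᵥ v = fderiv ℝ F x v := by
  rw [jacobianMatrix, ← Matrix.toLin'_apply, Matrix.toLin'_toMatrix']
  rfl

theorem injective_of_negative_symmetric_spec_trace_det_bounds_general
    {n : ℕ} (F : (Fin n → ℝ) → (Fin n → ℝ)) (hF : ContDiff ℝ 1 F)
    (hneg : ∀ x : Fin n → ℝ, ∀ μ : ℝ,
        HasRealEigenvalue (jacobianMatrix F x + (jacobianMatrix F x)ᵀ) μ → μ < 0) :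
    Function.Injective F := by
  refine injective_of_dotProduct_fderiv_apply_neg (hF.differentiable one_ne_zero) fun x v hv => ?_
  have hsymm : (jacobianMatrix F x + (jacobianMatrix F x)ᵀ).IsSymm := by
    rw [IsSymm, transpose_add, transpose_transpose, add_comm]
  have hquad := hsymm.dotProduct_mulVec_neg (hneg x) hv
  rw [dotProduct_add_transpose_mulVec, jacobianMatrix_mulVec] at hquad
  linarith

/-- Let `F : ℝⁿ → ℝⁿ` (n ≥ 2) be `C¹` with no complex eigenvalue of `JF(x)`
equal to zero for any `x`. Suppose every eigenvalue of `JF(x)+JF(x)ᵀ` is negative for every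
`x`, and there are `M₁, M₂ > 0` such that for every `x` the trace of `JF(x)+JF(x)ᵀ` is
greater than `-M₁` and the absolute value of its determinant is greater than `M₂`.
Then `F` is injective. -/
theorem injective_of_negative_symmetric_spec_trace_det_bounds
    {n : ℕ} (hn : 2 ≤ n) (F : (Fin n → ℝ) → (Fin n → ℝ)) (hF : ContDiff ℝ 1 F)
    (hspec : ∀ x : Fin n → ℝ, ∀ μ : ℂ, HasComplexEigenvalue (jacobianMatrix F x) μ → μ ≠ 0)
    (hneg : ∀ x : Fin n → ℝ, ∀ μ : ℝ,
        HasRealEigenvalue (jacobianMatrix F x + (jacobianMatrix F x)ᵀ) μ → μ < 0)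
    (hbound : ∃ M₁ > (0 : ℝ), ∃ M₂ > (0 : ℝ), ∀ x : Fin n → ℝ,
        -M₁ < (jacobianMatrix F x + (jacobianMatrix F x)ᵀ).trace ∧
        M₂ < |(jacobianMatrix F x + (jacobianMatrix F x)ᵀ).det|) :
    Function.Injective F :=
  injective_of_negative_symmetric_spec_trace_det_bounds_general F hF hneg
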